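/- (Theorem 6.) Let q be real with 0 < q < 1, α ≥ 1 an integer, d an odd positive integer, χ a Dirichlet character modulo d, F an odd positive integer divisible by d, 0 ≤ a < F an integer, x > 0 real, and s ∈ ℂ. Assume the convergence condition q^{α(x+a)} · [F:q^α] < (1 − q^{αF}) · [x+a:q^α]. Then H_q^χ(s : x : a : F | α) = ( [2:q] q^a (−1)^a χ(a) / ( [2:q^F] · [x+a:q^α]^s ) ) · Σ_{k=0}^∞ q^{α k (x+a)} C(−s,k) ( [F:q^α] / [x+a:q^α] )^k · Ẽ_{k,q^F}(α), where C(−s,k) = ( Π_{i=0}^{k−1} (−s − i) ) / k! is the generalized binomial coefficient. -/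

import Mathlib

open scoped BigOperators

/-- `[x:q] = (q^x - 1)/(q - 1)` with real exponentiation. -/
noncomputable def qNum (q x : ℝ) : ℝ := (q ^ x - 1) / (q - 1)

/-- Weighted `q`-Euler polynomial `Ẽ_{n,q}(x|α) = [2:q] ∑_{m≥0} (-1)^m q^m [m+x:q^α]^n`;
at `x = 0` these are the weighted `q`-Euler numbers. -/
noncomputable def qEuler (q : ℝ) (α n : ℕ) (x : ℝ) : ℝ :=
  qNum q 2 * ∑' m : ℕ, (-1 : ℝ) ^ m * q ^ m * (qNum (q ^ α) ((m : ℝ) + x)) ^ n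

/-- Partial Dirichlet-type zeta function
`H_q^χ(s : x : a : F | α) = [2:q] ∑_{m ≡ a (mod F)} q^m χ(m) (-1)^m [x+m:q^α]^{-s}`,
the sum over `m ≥ 0` with `m ≡ a (mod F)` being parametrized by `m = a + F j`, `j ≥ 0`. -/
noncomputable def qPartialZeta (q : ℝ) (d : ℕ) (χ : DirichletCharacter ℂ d) (α : ℕ)
    (s : ℂ) (x : ℝ) (a F : ℕ) : ℂ :=
  (qNum q 2 : ℂ) *
    ∑' j : ℕ, (q : ℂ) ^ (a + F * j) * χ ((a + F * j : ℕ) : ZMod d) * (-1 : ℂ) ^ (a + F * j) *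
      ((qNum (q ^ α) (x + ((a + F * j : ℕ) : ℝ)) : ℝ) : ℂ) ^ (-s)

/-- Generalized binomial coefficient `C(z,k) = z(z-1)⋯(z-k+1)/k!`. -/
noncomputable def genBinom (z : ℂ) (k : ℕ) : ℂ :=
  (∏ i ∈ Finset.range k, (z - (i : ℂ))) / (k.factorial : ℂ)

/-!
Writing `m = a + F j`, additivity of `q`-numbers gives
`[x + a + F j : q^α] = [x + a : q^α] (1 + c [j : q^{αF}])` with
`c = q^{α(x+a)} [F : q^α] / [x + a : q^α]`. Since `[j : q^{αF}] < 1 / (1 - q^{αF})`, we get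
`c [j : q^{αF}] ≤ ρ := c / (1 - q^{αF})`, and the convergence condition says exactly that
`ρ < 1`, so `(1 + c [j : q^{αF}])^{-s}` can be expanded by the binomial series. The resulting
double series is dominated by `∑ₖ |C(-s,k)| ρ^k · ∑ⱼ q^{Fj}`, so the two summations may be
interchanged, and the inner sums over `j` are the weighted `q^F`-Euler numbers: `χ` is constant
on the residue class because `d ∣ F`, and `(-1)^{Fj} = (-1)^j` because `F` is odd.
-/

theorem genBinom_eq_choose (z : ℂ) (k : ℕ) : genBinom z k = Ring.choose z k := by
  rw [genBinom, Ring.choose_eq_smul, ← Polynomial.aeval_eq_smeval, Polynomial.aeval_def,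
    Polynomial.eval₂_eq_eval_map, descPochhammer_map, descPochhammer_eval_eq_prod_range,
    smul_eq_mul, inv_mul_eq_div]

theorem hasSum_genBinom_mul_pow (z : ℂ) {t : ℂ} (ht : ‖t‖ < 1) :
    HasSum (fun k ↦ genBinom z k * t ^ k) ((1 + t) ^ z) := by
  have h := Complex.one_add_cpow_hasFPowerSeriesOnBall_zero (a := z) |>.hasSum (y := t)
    (by rwa [Metric.mem_eball, edist_zero_right, ← ofReal_norm, ENNReal.ofReal_lt_one])
  simpa [genBinom_eq_choose, binomialSeries, FormalMultilinearSeries.coeff_ofScalars, mul_comm]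
    using h

theorem summable_norm_genBinom_mul_pow (z : ℂ) {r : ℝ} (hr0 : 0 ≤ r) (hr1 : r < 1) :
    Summable fun k ↦ ‖genBinom z k‖ * r ^ k := by
  have h := (binomialSeries ℂ z).summable_norm_mul_pow (r := r.toNNReal)
    (lt_of_lt_of_le (by simpa using hr1) binomialSeries_radius_ge_one)
  simpa [genBinom_eq_choose, binomialSeries, FormalMultilinearSeries.ofScalars_norm, hr0] using h

theorem tsum_pow_mul_one_add_cpow {z w c : ℂ} {u : ℕ → ℂ} {ρ : ℝ} (hw : ‖w‖ < 1)
    (hρ : ∀ j, ‖c * u j‖ ≤ ρ) (hρ1 : ρ < 1) :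
    ∑' j, w ^ j * (1 + c * u j) ^ z = ∑' k, genBinom z k * c ^ k * ∑' j, w ^ j * u j ^ k := by
  have hρ0 : 0 ≤ ρ := (norm_nonneg _).trans (hρ 0)
  set g : ℕ → ℕ → ℂ := fun k j ↦ w ^ j * (genBinom z k * (c * u j) ^ k)
  have hg : ∀ j, w ^ j * (1 + c * u j) ^ z = ∑' k, g k j := fun j ↦
    (((hasSum_genBinom_mul_pow z ((hρ j).trans_lt hρ1)).mul_left _).tsum_eq).symm
  have hg_le : ∀ p : ℕ × ℕ, ‖Function.uncurry g p‖ ≤ ‖genBinom z p.1‖ * ρ ^ p.1 * ‖w‖ ^ p.2 := by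
    rintro ⟨k, j⟩
    simp only [Function.uncurry_apply_pair, g, norm_mul, norm_pow]
    rw [mul_comm]
    gcongr
    simpa only [norm_mul] using hρ j
  have hg_summable : Summable (Function.uncurry g) :=
    .of_norm_bounded ((summable_norm_genBinom_mul_pow z hρ0 hρ1).mul_of_nonneg
      (summable_geometric_of_lt_one (norm_nonneg w) hw) (fun _ ↦ by positivity)
      (fun _ ↦ by positivity)) hg_le
  rw [tsum_congr hg, hg_summable.tsum_comm]
  refine tsum_congr fun k ↦ ?_
  rw [← tsum_mul_left]
  exact tsum_congr fun j ↦ by ring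

theorem qNum_add {r : ℝ} (hr : 0 < r) (y c : ℝ) :
    qNum r (y + c) = qNum r y + r ^ y * qNum r c := by
  simp only [qNum, Real.rpow_add hr]
  rw [← mul_div_assoc, ← add_div]
  ring_nf

theorem qNum_natCast_mul (r : ℝ) (m n : ℕ) :
    qNum r ((m * n : ℕ) : ℝ) = qNum r m * qNum (r ^ m) n := by
  simp only [qNum, Real.rpow_natCast, pow_mul]
  rcases eq_or_ne (r ^ m) 1 with h | h
  · simp [h]
  · have hr : r - 1 ≠ 0 := sub_ne_zero.mpr (by rintro rfl; simp at h)
    field_simp [sub_ne_zero.mpr h]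

theorem qNum_add_natCast_mul {r : ℝ} (hr : 0 < r) {y : ℝ} (hy : qNum r y ≠ 0) (m n : ℕ) :
    qNum r (y + ((m * n : ℕ) : ℝ)) =
      qNum r y * (1 + r ^ y * qNum r m / qNum r y * qNum (r ^ m) n) := by
  rw [qNum_add hr, qNum_natCast_mul]
  field_simp

theorem qNum_eq_one_sub_div (r y : ℝ) : qNum r y = (1 - r ^ y) / (1 - r) := by
  rw [qNum, ← neg_div_neg_eq, neg_sub, neg_sub]

theorem qNum_nonneg {r : ℝ} (hr : 0 < r) {y : ℝ} (hy : 0 ≤ y) : 0 ≤ qNum r y := by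
  rcases le_total r 1 with h | h
  · exact div_nonneg_of_nonpos (by linarith [Real.rpow_le_one hr.le h hy]) (by linarith)
  · exact div_nonneg (by linarith [Real.one_le_rpow h hy]) (by linarith)

section UnitInterval

variable {r : ℝ} (hr0 : 0 < r) (hr1 : r < 1)
include hr0 hr1

theorem qNum_pos {y : ℝ} (hy : 0 < y) : 0 < qNum r y := by
  rw [qNum_eq_one_sub_div]
  have := Real.rpow_lt_one hr0.le hr1 hy
  exact div_pos (by linarith) (by linarith)

theorem qNum_le_inv_one_sub (y : ℝ) : qNum r y ≤ (1 - r)⁻¹ := by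
  rw [qNum_eq_one_sub_div, div_eq_mul_inv]
  have := Real.rpow_pos_of_pos hr0 y
  exact mul_le_of_le_one_left (by simp; linarith) (by linarith)

theorem norm_ofReal_mul_qNum_le {c : ℝ} (hc : 0 ≤ c) (j : ℕ) :
    ‖(c : ℂ) * (qNum r j : ℂ)‖ ≤ c * (1 - r)⁻¹ := by
  rw [← Complex.ofReal_mul, Complex.norm_real,
    Real.norm_of_nonneg (mul_nonneg hc (qNum_nonneg hr0 (Nat.cast_nonneg j)))]
  exact mul_le_mul_of_nonneg_left (qNum_le_inv_one_sub hr0 hr1 _) hc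

end UnitInterval

theorem rpow_natCast_mul_mul {r : ℝ} (hr : 0 ≤ r) (m k : ℕ) (y : ℝ) :
    r ^ (((m * k : ℕ) : ℝ) * y) = ((r ^ m) ^ y) ^ k := by
  rw [← Real.rpow_mul_natCast (pow_nonneg hr m), ← Real.rpow_natCast, ← Real.rpow_mul hr]
  push_cast
  ring_nf

theorem ofReal_qEuler_zero (r : ℝ) (α k : ℕ) :
    (qEuler r α k 0 : ℂ) = qNum r 2 * ∑' j : ℕ, (-(r : ℂ)) ^ j * (qNum (r ^ α) j : ℂ) ^ k := by
  simp only [qEuler, add_zero, Complex.ofReal_mul, Complex.ofReal_tsum, Complex.ofReal_pow,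
    Complex.ofReal_neg, Complex.ofReal_one, neg_pow (r : ℂ)]

theorem qPartialZeta_eq_tsum {q : ℝ} (hq0 : 0 < q) (hq1 : q < 1) {α : ℕ} (hα : 1 ≤ α) {d : ℕ}
    (χ : DirichletCharacter ℂ d) {F : ℕ} (hFo : Odd F) (hdF : d ∣ F) (s : ℂ) {x : ℝ} (a : ℕ)
    (hxa : 0 < x + a) :
    qPartialZeta q d χ α s x a F =
      qNum q 2 * ((q : ℂ) ^ a * (-1) ^ a * χ a * (qNum (q ^ α) (x + a) : ℂ) ^ (-s)) *
        ∑' j : ℕ, (-(q ^ F : ℂ)) ^ j * (1 + ((q ^ α) ^ (x + a) * qNum (q ^ α) F /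
          qNum (q ^ α) (x + a) : ℝ) * (qNum ((q ^ F) ^ α) j : ℂ)) ^ (-s) := by
  have hA0 : 0 < q ^ α := pow_pos hq0 α
  have hX := qNum_pos hA0 (pow_lt_one₀ hq0.le hq1 (by omega)) hxa
  rw [qPartialZeta, mul_assoc]
  refine congrArg _ ((tsum_congr fun j ↦ ?_).trans tsum_mul_left)
  have hχ : χ ((a + F * j : ℕ) : ZMod d) = χ a := by
    simp [(ZMod.natCast_eq_zero_iff F d).mpr hdF]
  have hsign : (-1 : ℂ) ^ (a + F * j) = (-1) ^ a * (-1) ^ j := by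
    rw [pow_add, pow_mul, hFo.neg_one_pow]
  have hbase : 0 ≤ (q ^ α) ^ (x + a) * qNum (q ^ α) F / qNum (q ^ α) (x + a) *
      qNum ((q ^ F) ^ α) j := by
    have := qNum_nonneg hA0 (Nat.cast_nonneg F)
    have := qNum_nonneg (pow_pos (pow_pos hq0 F) α) (Nat.cast_nonneg j)
    positivity
  rw [hχ, hsign, show x + ((a + F * j : ℕ) : ℝ) = (x + a) + ((F * j : ℕ) : ℝ) by push_cast; ring,
    qNum_add_natCast_mul hA0 hX.ne', pow_right_comm q α F,
    Complex.ofReal_mul, Complex.mul_cpow_ofReal_nonneg hX.le (by linarith)]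
  push_cast
  ring

theorem statement12_general (q : ℝ) (hq0 : 0 < q) (hq1 : q < 1) (α : ℕ) (hα : 1 ≤ α)
    (d : ℕ) (χ : DirichletCharacter ℂ d)
    (F : ℕ) (hFo : Odd F) (hdF : d ∣ F)
    (a : ℕ) (x : ℝ) (hx : 0 < x) (s : ℂ)
    (hconv : q ^ ((α : ℝ) * (x + a)) * qNum (q ^ α) F <
      (1 - q ^ (α * F)) * qNum (q ^ α) (x + a)) :
    qPartialZeta q d χ α s x a F =
      ((qNum q 2 : ℝ) : ℂ) * (q : ℂ) ^ a * (-1 : ℂ) ^ a * χ (a : ZMod d) /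
          (((qNum (q ^ F) 2 : ℝ) : ℂ) * ((qNum (q ^ α) (x + a) : ℝ) : ℂ) ^ s) *
        ∑' k : ℕ,
          ((q ^ ((↑(α * k) : ℝ) * (x + a)) : ℝ) : ℂ) * genBinom (-s) k *
            ((qNum (q ^ α) F / qNum (q ^ α) (x + a) : ℝ) : ℂ) ^ k *
              ((qEuler (q ^ F) α k 0 : ℝ) : ℂ) := by
  have hxa : 0 < x + a := by positivity
  have hA0 : 0 < q ^ α := pow_pos hq0 α
  have hA1 : q ^ α < 1 := pow_lt_one₀ hq0.le hq1 (by omega)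
  have hqF0 : 0 < q ^ F := pow_pos hq0 F
  have hqF1 : q ^ F < 1 := pow_lt_one₀ hq0.le hq1 hFo.pos.ne'
  have hQ1 : (q ^ F) ^ α < 1 := pow_lt_one₀ hqF0.le hqF1 (by omega)
  set X := qNum (q ^ α) (x + a)
  have hX : 0 < X := qNum_pos hA0 hA1 hxa
  set c := (q ^ α) ^ (x + a) * qNum (q ^ α) F / X
  have hc : 0 ≤ c := by have := qNum_nonneg hA0 (Nat.cast_nonneg F); positivity
  have hc_lt : c * (1 - (q ^ F) ^ α)⁻¹ < 1 := by
    rw [Real.rpow_mul hq0.le, Real.rpow_natCast] at hconv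
    rw [← div_eq_mul_inv, div_lt_one (sub_pos.mpr hQ1), div_lt_iff₀ hX, ← pow_mul, mul_comm F]
    linarith
  have h2 : (qNum (q ^ F) 2 : ℂ) ≠ 0 := by exact_mod_cast (qNum_pos hqF0 hqF1 two_pos).ne'
  have hXs : (X : ℂ) ^ s ≠ 0 := by simp [Complex.cpow_eq_zero_iff, hX.ne']
  rw [qPartialZeta_eq_tsum hq0 hq1 hα χ hFo hdF s a hxa, tsum_pow_mul_one_add_cpow
    (by simpa [abs_of_pos hq0] using hqF1) (norm_ofReal_mul_qNum_le (pow_pos hqF0 α) hQ1 hc) hc_lt]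
  simp only [ofReal_qEuler_zero, rpow_natCast_mul_mul hq0.le]
  rw [← tsum_mul_left (ι := ℕ), ← tsum_mul_left (ι := ℕ)]
  refine tsum_congr fun k ↦ ?_
  simp only [c, X, Complex.cpow_neg]
  push_cast
  field_simp
  ring

theorem statement12 (q : ℝ) (hq0 : 0 < q) (hq1 : q < 1) (α : ℕ) (hα : 1 ≤ α)
    (d : ℕ) (hd0 : 0 < d) (hdo : Odd d) (χ : DirichletCharacter ℂ d)
    (F : ℕ) (hF0 : 0 < F) (hFo : Odd F) (hdF : d ∣ F)
    (a : ℕ) (ha : a < F) (x : ℝ) (hx : 0 < x) (s : ℂ)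
    (hconv : q ^ ((α : ℝ) * (x + a)) * qNum (q ^ α) F <
      (1 - q ^ (α * F)) * qNum (q ^ α) (x + a)) :
    qPartialZeta q d χ α s x a F =
      ((qNum q 2 : ℝ) : ℂ) * (q : ℂ) ^ a * (-1 : ℂ) ^ a * χ (a : ZMod d) /
          (((qNum (q ^ F) 2 : ℝ) : ℂ) * ((qNum (q ^ α) (x + a) : ℝ) : ℂ) ^ s) *
        ∑' k : ℕ,
          ((q ^ ((↑(α * k) : ℝ) * (x + a)) : ℝ) : ℂ) * genBinom (-s) k *
            ((qNum (q ^ α) F / qNum (q ^ α) (x + a) : ℝ) : ℂ) ^ k *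
              ((qEuler (q ^ F) α k 0 : ℝ) : ℂ) :=
  statement12_general q hq0 hq1 α hα d χ F hFo hdF a x hx s hconv
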